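/- arXiv:2603.03107 — 2 statements merged into one kernel-verified Lean document; each statement's English description precedes it below -/
import Mathlib

section
/- Assume τ ≥ ‖𝓑^Z‖_max^{1/2} (as elements of [0,+∞]) and (𝓑^Z × 𝓑^S) ∩ 𝒢_(L) ≠ ∅. Then V_(LB) = V_(FB) = V_(L), and 𝒢_(LB) ⊆ {(XYᵀ, S) : (X, Y, S) ∈ 𝒢_(FB)} ⊆ 𝒢_(L). -/
open Matrix Set
open scoped ENNReal

attribute [local instance] Matrix.frobeniusNormedAddCommGroup

noncomputable section

/-- number of nonzero entries (the ℓ0-norm). -/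
def l0 {m n : ℕ} (S : Matrix (Fin m) (Fin n) ℝ) : ℕ :=
  {p : Fin m × Fin n | S p.1 p.2 ≠ 0}.ncard

/-- number of nonzero columns. -/
def nnzc {m d : ℕ} (X : Matrix (Fin m) (Fin d) ℝ) : ℕ :=
  {i : Fin d | ∃ j, X j i ≠ 0}.ncard

/-- Euclidean norm of the `i`-th column. -/
def colNorm {m d : ℕ} (X : Matrix (Fin m) (Fin d) ℝ) (i : Fin d) : ℝ :=
  Real.sqrt (∑ j, (X j i) ^ 2)

/-- spectral (ℓ2 operator) norm of a matrix. -/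
def specNorm {m n : ℕ} (Z : Matrix (Fin m) (Fin n) ℝ) : ℝ :=
  ‖LinearMap.toContinuousLinearMap (Matrix.toEuclideanLin Z)‖

/-- set of global minimizers of `g` on the feasible set `s`. -/
def globMin {α : Type*} (g : α → ℝ) (s : Set α) : Set α :=
  {a ∈ s | ∀ b ∈ s, g a ≤ g b}

/-- optimal value of the problem of minimizing `g` over `s`. -/
def optVal {α : Type*} (g : α → ℝ) (s : Set α) : ℝ :=
  sInf (g '' s)

/-!
A factorization `Z = X * Yᵀ` always has `2 * rank Z ≤ nnzc X + nnzc Y`, so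
`F₀ (X * Yᵀ, S) ≤ F (X, Y, S)`. Conversely, the balanced SVD `X = U Σ^{1/2}`, `Y = V Σ^{1/2}`
(built from an orthogonal eigenbasis of `Zᵀ * Z`) has `rank Z ≤ d` nonzero columns in each
factor, and each of its columns has norm `σᵢ^{1/2} ≤ ‖Z‖₂^{1/2}`, which is at most `τ` when
`Z ∈ 𝓑^Z`; for it `F (X, Y, S) = F₀ (Z, S)`. A minimizer of (L) lying in `𝓑^Z × 𝓑^S` therefore
lifts to a minimizer of (FB) with the same value.
-/

section Columns

variable {m n d : ℕ}

theorem nnzc_eq_card (X : Matrix (Fin m) (Fin d) ℝ) :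
    nnzc X = Fintype.card {i // ∃ j, X j i ≠ 0} := by
  rw [nnzc, ← Nat.card_coe_set_eq, Nat.card_eq_fintype_card]
  rfl

theorem colNorm_nonneg (X : Matrix (Fin m) (Fin d) ℝ) (i : Fin d) : 0 ≤ colNorm X i :=
  Real.sqrt_nonneg _

theorem colNorm_eq_zero_iff {X : Matrix (Fin m) (Fin d) ℝ} {i : Fin d} :
    colNorm X i = 0 ↔ ∀ j, X j i = 0 := by
  rw [colNorm, Real.sqrt_eq_zero (Finset.sum_nonneg fun j _ => sq_nonneg _),
    Finset.sum_eq_zero_iff_of_nonneg fun j _ => sq_nonneg _]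
  simp

theorem colNorm_mul_diagonal (X : Matrix (Fin m) (Fin d) ℝ) (s : Fin d → ℝ) (i : Fin d) :
    colNorm (X * diagonal s) i = |s i| * colNorm X i := by
  simp only [colNorm, mul_diagonal, mul_pow, ← Finset.sum_mul]
  rw [Real.sqrt_mul (Finset.sum_nonneg fun j _ => sq_nonneg _), Real.sqrt_sq_eq_abs, mul_comm]

theorem nnzc_mul_diagonal_le (X : Matrix (Fin m) (Fin d) ℝ) (s : Fin d → ℝ) :
    nnzc (X * diagonal s) ≤ Fintype.card {i // s i ≠ 0} := by
  rw [nnzc_eq_card]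
  refine Fintype.card_subtype_mono _ _ fun i ⟨j, hj⟩ hs => hj ?_
  simp [mul_diagonal, hs]

theorem rank_le_nnzc (X : Matrix (Fin m) (Fin d) ℝ) : X.rank ≤ nnzc X := by
  classical
  let w : Fin d → ℝ := fun i => if ∃ j, X j i ≠ 0 then 1 else 0
  have hX : X * diagonal w = X := by
    ext j i
    by_cases h : ∃ j, X j i ≠ 0 <;> simp_all [w, mul_diagonal]
  calc X.rank = (X * diagonal w).rank := by rw [hX]
    _ ≤ (diagonal w).rank := rank_mul_le_right _ _
    _ = nnzc X := by
      rw [rank_diagonal, nnzc_eq_card]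
      exact Fintype.card_congr <| Equiv.subtypeEquivRight fun i => by
        by_cases h : ∃ j, X j i ≠ 0 <;> simp [w, h]

theorem two_mul_rank_mul_transpose_le (X : Matrix (Fin m) (Fin d) ℝ)
    (Y : Matrix (Fin n) (Fin d) ℝ) : 2 * (X * Yᵀ).rank ≤ nnzc X + nnzc Y := by
  have hX := (rank_mul_le_left X Yᵀ).trans (rank_le_nnzc X)
  have hY := (rank_mul_le_right X Yᵀ).trans ((rank_transpose Y).trans_le (rank_le_nnzc Y))
  omega

theorem sq_colNorm (X : Matrix (Fin m) (Fin d) ℝ) (i : Fin d) :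
    colNorm X i ^ 2 = (Xᵀ * X) i i := by
  rw [colNorm, Real.sq_sqrt (Finset.sum_nonneg fun j _ => sq_nonneg _)]
  simp [mul_apply, sq]

theorem colNorm_eq_norm (X : Matrix (Fin m) (Fin d) ℝ) (i : Fin d) :
    colNorm X i = ‖WithLp.toLp 2 (fun j => X j i)‖ := by
  simp [colNorm, EuclideanSpace.norm_eq]

theorem colNorm_mul_le (Z : Matrix (Fin m) (Fin n) ℝ) (M : Matrix (Fin n) (Fin d) ℝ) (i : Fin d) :
    colNorm (Z * M) i ≤ specNorm Z * colNorm M i := by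
  have hcol : WithLp.toLp 2 (fun a => (Z * M) a i) =
      LinearMap.toContinuousLinearMap (toEuclideanLin Z) (WithLp.toLp 2 fun c => M c i) := by
    ext a
    simp [mulVec, dotProduct, mul_apply]
  rw [colNorm_eq_norm, colNorm_eq_norm, specNorm, hcol]
  exact ContinuousLinearMap.le_opNorm _ _

theorem rank_eq_card_of_transpose_mul_self_eq_diagonal {W : Matrix (Fin m) (Fin n) ℝ}
    {μ : Fin n → ℝ} (hW : Wᵀ * W = diagonal μ) : W.rank = Fintype.card {i // μ i ≠ 0} := by
  classical
  rw [← rank_transpose_mul_self, hW, rank_diagonal]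

end Columns

theorem exists_mul_transpose_eq_of_nnzc_le {m n k d : ℕ} (X₀ : Matrix (Fin m) (Fin k) ℝ)
    (Y₀ : Matrix (Fin n) (Fin k) ℝ) (hd : nnzc X₀ ≤ d) {r : ℝ} (hr : 0 ≤ r)
    (hX₀ : ∀ i, colNorm X₀ i ≤ r) (hY₀ : ∀ i, colNorm Y₀ i ≤ r) :
    ∃ (X : Matrix (Fin m) (Fin d) ℝ) (Y : Matrix (Fin n) (Fin d) ℝ), X * Yᵀ = X₀ * Y₀ᵀ ∧
      nnzc X ≤ nnzc X₀ ∧ nnzc Y ≤ nnzc X₀ ∧ (∀ i, colNorm X i ≤ r) ∧ (∀ i, colNorm Y i ≤ r) := by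
  classical
  obtain ⟨e⟩ : Nonempty ({i // ∃ j, X₀ j i ≠ 0} ↪ Fin d) :=
    Function.Embedding.nonempty_of_card_le (by rwa [Fintype.card_fin, ← nnzc_eq_card])
  -- the nonzero columns of `X₀` (and the matching ones of `Y₀`) are moved to the slots `e i`
  let select {p : ℕ} (M : Matrix (Fin p) (Fin k) ℝ) : Matrix (Fin p) (Fin d) ℝ :=
    fun a => Function.extend e (fun i => M a i) 0
  have select_apply {p : ℕ} (M : Matrix (Fin p) (Fin k) ℝ) a i : select M a (e i) = M a i :=
    e.injective.extend_apply _ _ _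
  have select_apply_of_notMem {p : ℕ} (M : Matrix (Fin p) (Fin k) ℝ) a l (hl : l ∉ range e) :
      select M a l = 0 :=
    Function.extend_apply' _ _ _ fun ⟨i, hi⟩ => hl ⟨i, hi⟩
  have colNorm_select {p : ℕ} (M : Matrix (Fin p) (Fin k) ℝ) (hM : ∀ i, colNorm M i ≤ r) l :
      colNorm (select M) l ≤ r := by
    by_cases hl : l ∈ range e
    · obtain ⟨i, rfl⟩ := hl
      simpa only [colNorm, select_apply] using hM i
    · rw [colNorm_eq_zero_iff.2 fun a => select_apply_of_notMem M a l hl]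
      exact hr
  have nnzc_select_le {p : ℕ} (M : Matrix (Fin p) (Fin k) ℝ) : nnzc (select M) ≤ nnzc X₀ := by
    calc nnzc (select M) ≤ (range e).ncard :=
          Set.ncard_le_ncard fun l ⟨a, hl⟩ => by_contra fun h => hl (select_apply_of_notMem M a l h)
      _ = nnzc X₀ := by
          rw [Set.ncard_range_of_injective e.injective, Nat.card_eq_fintype_card, nnzc_eq_card]
  refine ⟨select X₀, select Y₀, ?_, nnzc_select_le X₀, nnzc_select_le Y₀,
    colNorm_select X₀ hX₀, colNorm_select Y₀ hY₀⟩
  ext a c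
  simp only [mul_apply, transpose_apply]
  calc ∑ l, select X₀ a l * select Y₀ c l
        = ∑ l ∈ Finset.univ.map e, select X₀ a l * select Y₀ c l := by
        refine (Finset.sum_subset (Finset.subset_univ _) fun l _ hl => ?_).symm
        rw [select_apply_of_notMem X₀ a l (by simpa using hl), zero_mul]
    _ = ∑ i : {i // ∃ j, X₀ j i ≠ 0}, X₀ a i * Y₀ c i := by
        simp only [Finset.sum_map, select_apply]
    _ = ∑ i, X₀ a i * Y₀ c i := by
        rw [← Finset.sum_subtype (p := fun i => ∃ j, X₀ j i ≠ 0) _ Finset.mem_filter_univ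
          fun i => X₀ a i * Y₀ c i]
        exact Finset.sum_filter_of_ne fun i _ h => ⟨a, left_ne_zero_of_mul h⟩

theorem exists_balanced_factorization_of_orthogonal {m n : ℕ} (Z : Matrix (Fin m) (Fin n) ℝ)
    (U : Matrix (Fin n) (Fin n) ℝ) (μ : Fin n → ℝ) (hU : Uᵀ * U = 1)
    (hμ : (Z * U)ᵀ * (Z * U) = diagonal μ) :
    ∃ (X₀ : Matrix (Fin m) (Fin n) ℝ) (Y₀ : Matrix (Fin n) (Fin n) ℝ), X₀ * Y₀ᵀ = Z ∧
      nnzc X₀ ≤ Z.rank ∧ (∀ i, colNorm X₀ i ≤ √(specNorm Z)) ∧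
      (∀ i, colNorm Y₀ i ≤ √(specNorm Z)) := by
  set W := Z * U
  -- `s i` is the fourth root of the `i`-th eigenvalue of `Zᵀ * Z`
  set s : Fin n → ℝ := fun i => √(colNorm W i)
  have hUcol i : colNorm U i = 1 := by
    rw [← pow_left_inj₀ (colNorm_nonneg U i) zero_le_one two_ne_zero, sq_colNorm, hU, one_apply_eq,
      one_pow]
  have hWcol i : colNorm W i = s i ^ 2 := (Real.sq_sqrt (Real.sqrt_nonneg _)).symm
  have hμs i : μ i = (s i ^ 2) ^ 2 := by rw [← hWcol, sq_colNorm, hμ, diagonal_apply_eq]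
  have hs_le i : s i ≤ √(specNorm Z) := by
    refine Real.sqrt_le_sqrt ?_
    simpa [hUcol] using colNorm_mul_le Z U i
  have hW_scale : W * diagonal (fun i => (s i)⁻¹ * s i) = W := by
    ext a i
    rw [mul_diagonal]
    by_cases hs : s i = 0
    · rw [colNorm_eq_zero_iff.1 (by rw [hWcol, hs, sq, zero_mul] : colNorm W i = 0) a, zero_mul]
    · rw [inv_mul_cancel₀ hs, mul_one]
  refine ⟨W * diagonal (fun i => (s i)⁻¹), U * diagonal s, ?_, ?_, fun i => ?_, fun i => ?_⟩
  · rw [transpose_mul, diagonal_transpose, Matrix.mul_assoc, ← Matrix.mul_assoc (diagonal _),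
      diagonal_mul_diagonal, ← Matrix.mul_assoc, hW_scale, Matrix.mul_assoc, mul_eq_one_comm.1 hU,
      Matrix.mul_one]
  · calc nnzc (W * diagonal fun i => (s i)⁻¹) ≤ Fintype.card {i // (s i)⁻¹ ≠ 0} :=
          nnzc_mul_diagonal_le _ _
      _ = Fintype.card {i // μ i ≠ 0} :=
          Fintype.card_congr (Equiv.subtypeEquivRight fun i => by simp [hμs])
      _ = Z.rank := by
          rw [← rank_eq_card_of_transpose_mul_self_eq_diagonal hμ,
            rank_mul_eq_left_of_isUnit_det U Z (isUnit_det_of_left_inverse hU)]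
  · rw [colNorm_mul_diagonal, hWcol, abs_inv, abs_of_nonneg (Real.sqrt_nonneg _), sq,
      ← mul_assoc, inv_mul_mul_self]
    exact hs_le i
  · rw [colNorm_mul_diagonal, hUcol, mul_one, abs_of_nonneg (Real.sqrt_nonneg _)]
    exact hs_le i

theorem Matrix.IsHermitian.exists_transpose_mul_mul_eq_diagonal {n : Type*} [Fintype n]
    [DecidableEq n] {A : Matrix n n ℝ} (hA : A.IsHermitian) :
    ∃ (U : Matrix n n ℝ) (μ : n → ℝ), Uᵀ * U = 1 ∧ Uᵀ * A * U = diagonal μ := by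
  refine ⟨hA.eigenvectorUnitary, hA.eigenvalues, ?_, ?_⟩
  · simpa [star_eq_conjTranspose] using Unitary.coe_star_mul_self hA.eigenvectorUnitary
  · simpa [star_eq_conjTranspose] using hA.conjStarAlgAut_star_eigenvectorUnitary

theorem exists_balanced_factorization {m n : ℕ} (Z : Matrix (Fin m) (Fin n) ℝ) :
    ∃ (X₀ : Matrix (Fin m) (Fin n) ℝ) (Y₀ : Matrix (Fin n) (Fin n) ℝ), X₀ * Y₀ᵀ = Z ∧
      nnzc X₀ ≤ Z.rank ∧ (∀ i, colNorm X₀ i ≤ √(specNorm Z)) ∧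
      (∀ i, colNorm Y₀ i ≤ √(specNorm Z)) := by
  have hA : (Zᵀ * Z).IsHermitian := by
    simpa only [conjTranspose_eq_transpose_of_trivial] using isHermitian_conjTranspose_mul_self Z
  obtain ⟨U, μ, hU, hμ⟩ := hA.exists_transpose_mul_mul_eq_diagonal
  refine exists_balanced_factorization_of_orthogonal Z U μ hU ?_
  rw [transpose_mul, Matrix.mul_assoc, ← Matrix.mul_assoc Zᵀ, ← Matrix.mul_assoc, hμ]

theorem exists_factorization_of_rank_le {m n d : ℕ} (Z : Matrix (Fin m) (Fin n) ℝ)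
    (hZ : Z.rank ≤ d) :
    ∃ (X : Matrix (Fin m) (Fin d) ℝ) (Y : Matrix (Fin n) (Fin d) ℝ), X * Yᵀ = Z ∧
      nnzc X ≤ Z.rank ∧ nnzc Y ≤ Z.rank ∧ (∀ i, colNorm X i ≤ √(specNorm Z)) ∧
      (∀ i, colNorm Y i ≤ √(specNorm Z)) := by
  obtain ⟨X₀, Y₀, hZ₀, hX₀, hX₀col, hY₀col⟩ := exists_balanced_factorization Z
  obtain ⟨X, Y, hXY, hX, hY, hXcol, hYcol⟩ := exists_mul_transpose_eq_of_nnzc_le X₀ Y₀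
    (hX₀.trans hZ) (Real.sqrt_nonneg _) hX₀col hY₀col
  exact ⟨X, Y, hXY.trans hZ₀, hX.trans hX₀, hY.trans hX₀, hXcol, hYcol⟩

theorem ofReal_sqrt_le_iSup_rpow {ι : Type*} {s : Set ι} {g : ι → ℝ} (hg : ∀ j, 0 ≤ g j) {i : ι}
    (hi : i ∈ s) : ENNReal.ofReal √(g i) ≤ (⨆ j ∈ s, ENNReal.ofReal (g j)) ^ (1 / 2 : ℝ) := by
  rw [Real.sqrt_eq_rpow, ← ENNReal.ofReal_rpow_of_nonneg (hg i) (by norm_num)]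
  exact ENNReal.rpow_le_rpow (le_iSup₂ (f := fun j (_ : j ∈ s) => ENNReal.ofReal (g j)) i hi)
    (by norm_num)

section Reformulation

variable {α β : Type*} {F : α → ℝ} {G : β → ℝ} {φ : β → α} {A A' : Set α} {B : Set β}

theorem optVal_eq_of_mem_globMin {a : α} (h : a ∈ globMin F A) : optVal F A = F a :=
  IsLeast.csInf_eq ⟨⟨a, h.1, rfl⟩, fun _ ⟨b, hb, hba⟩ => hba ▸ h.2 b hb⟩

theorem exists_mem_globMin_map_eq (hB : ∀ t ∈ B, φ t ∈ A' ∧ F (φ t) ≤ G t)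
    (hA : ∀ p ∈ A, ∃ t ∈ B, φ t = p ∧ G t ≤ F p) {p : α} (hpA : p ∈ A)
    (hp : p ∈ globMin F A') : ∃ t ∈ globMin G B, φ t = p ∧ G t = F p := by
  obtain ⟨t, htB, rfl, hle⟩ := hA p hpA
  have hGt : G t = F (φ t) := le_antisymm hle (hB t htB).2
  refine ⟨t, ⟨htB, fun t' ht' => ?_⟩, rfl, hGt⟩
  calc G t = F (φ t) := hGt
    _ ≤ F (φ t') := hp.2 _ (hB t' ht').1
    _ ≤ G t' := (hB t' ht').2

theorem optVal_eq_and_globMin_subset_of_lift (hB : ∀ t ∈ B, φ t ∈ A' ∧ F (φ t) ≤ G t)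
    (hA : ∀ p ∈ A, ∃ t ∈ B, φ t = p ∧ G t ≤ F p) (hAA' : A ⊆ A')
    (hmin : (A ∩ globMin F A').Nonempty) :
    optVal F A = optVal G B ∧ optVal G B = optVal F A' ∧
      globMin F A ⊆ φ '' globMin G B ∧ φ '' globMin G B ⊆ globMin F A' := by
  obtain ⟨p₀, hp₀A, hp₀⟩ := hmin
  obtain ⟨t₀, ht₀, rfl, hGt₀⟩ := exists_mem_globMin_map_eq hB hA hp₀A hp₀
  have hp₀' : φ t₀ ∈ globMin F A := ⟨hp₀A, fun q hq => hp₀.2 q (hAA' hq)⟩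
  refine ⟨?_, ?_, fun p hp => ?_, ?_⟩
  · rw [optVal_eq_of_mem_globMin hp₀', optVal_eq_of_mem_globMin ht₀, hGt₀]
  · rw [optVal_eq_of_mem_globMin ht₀, optVal_eq_of_mem_globMin hp₀, hGt₀]
  · have hpA' : p ∈ globMin F A' := ⟨hAA' hp.1, fun q hq => (hp.2 _ hp₀A).trans (hp₀.2 q hq)⟩
    obtain ⟨t, ht, rfl, -⟩ := exists_mem_globMin_map_eq hB hA hp.1 hpA'
    exact ⟨t, ht, rfl⟩
  · rintro _ ⟨t, ht, rfl⟩
    refine ⟨(hB t ht.1).1, fun q hq => ?_⟩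
    calc F (φ t) ≤ G t := (hB t ht.1).2
      _ ≤ G t₀ := ht.2 t₀ ht₀.1
      _ = F (φ t₀) := hGt₀
      _ ≤ F q := hp₀.2 q hq

end Reformulation

theorem stmt1_general (m n d : ℕ)
    (lam beta : ℝ) (hlam : 0 ≤ lam)
    (f : Matrix (Fin m) (Fin n) ℝ → Matrix (Fin m) (Fin n) ℝ → ℝ)
    (BS : Set (Matrix (Fin m) (Fin n) ℝ))
    (BZ : Set (Matrix (Fin m) (Fin n) ℝ))
    -- the ball constraint sets 𝓑^X and 𝓑^Y with bound τ ∈ [0,∞]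
    (τ : ℝ≥0∞)
    (BX : Set (Matrix (Fin m) (Fin d) ℝ))
    (hBX : BX = {X | ∀ i, ENNReal.ofReal (colNorm X i) ≤ τ})
    (BY : Set (Matrix (Fin n) (Fin d) ℝ))
    (hBY : BY = {Y | ∀ i, ENNReal.ofReal (colNorm Y i) ≤ τ})
    -- objectives and feasible sets
    (F0 : Matrix (Fin m) (Fin n) ℝ × Matrix (Fin m) (Fin n) ℝ → ℝ)
    (hF0 : F0 = fun p => f p.1 p.2 + 2 * lam * (p.1.rank : ℝ) + beta * (l0 p.2 : ℝ))
    (feasL feasLB : Set (Matrix (Fin m) (Fin n) ℝ × Matrix (Fin m) (Fin n) ℝ))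
    (hfeasL : feasL = {p | p.1.rank ≤ d ∧ p.2 ∈ BS})
    (hfeasLB : feasLB = {p | p.1 ∈ BZ ∧ p.1.rank ≤ d ∧ p.2 ∈ BS})
    (FF : Matrix (Fin m) (Fin d) ℝ × Matrix (Fin n) (Fin d) ℝ × Matrix (Fin m) (Fin n) ℝ → ℝ)
    (hFF : FF = fun t => f (t.1 * t.2.1ᵀ) t.2.2 +
      lam * ((nnzc t.1 : ℝ) + (nnzc t.2.1 : ℝ)) + beta * (l0 t.2.2 : ℝ))
    (feasFB : Set (Matrix (Fin m) (Fin d) ℝ × Matrix (Fin n) (Fin d) ℝ × Matrix (Fin m) (Fin n) ℝ))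
    (hfeasFB : feasFB = {t | t.1 ∈ BX ∧ t.2.1 ∈ BY ∧ t.2.2 ∈ BS})
    -- assumption: τ ≥ ‖𝓑^Z‖_max^{1/2}
    (hτ : (⨆ U ∈ BZ, ENNReal.ofReal (specNorm U)) ^ (1/2 : ℝ) ≤ τ)
    -- assumption: (𝓑^Z × 𝓑^S) ∩ 𝒢_(L) ≠ ∅
    (hG : ((BZ ×ˢ BS) ∩ globMin F0 feasL).Nonempty) :
    optVal F0 feasLB = optVal FF feasFB ∧
    optVal FF feasFB = optVal F0 feasL ∧
    globMin F0 feasLB ⊆ (fun t => (t.1 * t.2.1ᵀ, t.2.2)) '' globMin FF feasFB ∧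
    (fun t => (t.1 * t.2.1ᵀ, t.2.2)) '' globMin FF feasFB ⊆ globMin F0 feasL := by
  subst hF0 hFF hfeasL hfeasLB hfeasFB hBX hBY
  refine optVal_eq_and_globMin_subset_of_lift ?_ ?_ (fun p hp => hp.2) ?_
  · rintro ⟨X, Y, S⟩ ⟨-, -, hS⟩
    have hrank : 2 * ((X * Yᵀ).rank : ℝ) ≤ nnzc X + nnzc Y := by
      exact_mod_cast two_mul_rank_mul_transpose_le X Y
    refine ⟨⟨(rank_mul_le_left X Yᵀ).trans (rank_le_width X), hS⟩, ?_⟩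
    dsimp only
    linarith [mul_le_mul_of_nonneg_left hrank hlam]
  · rintro ⟨Z, S⟩ ⟨hZ, hZd, hS⟩
    obtain ⟨X, Y, rfl, hX, hY, hXcol, hYcol⟩ := exists_factorization_of_rank_le Z hZd
    have hcol {r : ℝ} (hr : r ≤ √(specNorm (X * Yᵀ))) : ENNReal.ofReal r ≤ τ :=
      calc ENNReal.ofReal r ≤ ENNReal.ofReal √(specNorm (X * Yᵀ)) := ENNReal.ofReal_le_ofReal hr
        _ ≤ (⨆ U ∈ BZ, ENNReal.ofReal (specNorm U)) ^ (1 / 2 : ℝ) :=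
          ofReal_sqrt_le_iSup_rpow (g := specNorm) (fun _ => norm_nonneg _) hZ
        _ ≤ τ := hτ
    have hnnzc : ((nnzc X : ℝ) + nnzc Y) ≤ 2 * ((X * Yᵀ).rank : ℝ) := by
      exact_mod_cast (by omega : nnzc X + nnzc Y ≤ 2 * (X * Yᵀ).rank)
    refine ⟨(X, Y, S), ⟨fun i => hcol (hXcol i), fun i => hcol (hYcol i), hS⟩, rfl, ?_⟩
    dsimp only
    linarith [mul_le_mul_of_nonneg_left hnnzc hlam]
  · obtain ⟨p, ⟨hZ, hS⟩, hp⟩ := hG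
    exact ⟨p, ⟨hZ, hp.1.1, hS⟩, hp⟩

/-- If `τ ≥ ‖𝓑^Z‖_max^{1/2}` and `(𝓑^Z × 𝓑^S) ∩ 𝒢_(L) ≠ ∅`, then
`V_(LB) = V_(FB) = V_(L)` and `𝒢_(LB) ⊆ {(XYᵀ, S) : (X,Y,S) ∈ 𝒢_(FB)} ⊆ 𝒢_(L)`. -/
theorem stmt1 (m n d : ℕ) (hm : 0 < m) (hn : 0 < n) (hd : 0 < d)
    (lam beta : ℝ) (hlam : 0 ≤ lam) (hbeta : 0 ≤ beta)
    (f : Matrix (Fin m) (Fin n) ℝ → Matrix (Fin m) (Fin n) ℝ → ℝ)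
    (hf0 : ∀ Z S, 0 ≤ f Z S)
    (hfLip : LocallyLipschitz fun p : Matrix (Fin m) (Fin n) ℝ × Matrix (Fin m) (Fin n) ℝ =>
      f p.1 p.2)
    (κ1 κ2 : Fin m → Fin n → EReal)
    (hκ1 : ∀ i j, κ1 i j ≤ 0) (hκ2 : ∀ i j, 0 ≤ κ2 i j)
    (BS : Set (Matrix (Fin m) (Fin n) ℝ))
    (hBS : BS = {S | ∀ i j, κ1 i j ≤ (S i j : EReal) ∧ (S i j : EReal) ≤ κ2 i j})
    -- the box constraint set 𝓑^Z, with possibly infinite bounds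
    (κZ1 κZ2 : Fin m → Fin n → EReal)
    (BZ : Set (Matrix (Fin m) (Fin n) ℝ))
    (hBZ : BZ = {Z | ∀ i j, κZ1 i j ≤ (Z i j : EReal) ∧ (Z i j : EReal) ≤ κZ2 i j})
    -- the ball constraint sets 𝓑^X and 𝓑^Y with bound τ ∈ [0,∞]
    (τ : ℝ≥0∞)
    (BX : Set (Matrix (Fin m) (Fin d) ℝ))
    (hBX : BX = {X | ∀ i, ENNReal.ofReal (colNorm X i) ≤ τ})
    (BY : Set (Matrix (Fin n) (Fin d) ℝ))
    (hBY : BY = {Y | ∀ i, ENNReal.ofReal (colNorm Y i) ≤ τ})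
    -- objectives and feasible sets
    (F0 : Matrix (Fin m) (Fin n) ℝ × Matrix (Fin m) (Fin n) ℝ → ℝ)
    (hF0 : F0 = fun p => f p.1 p.2 + 2 * lam * (p.1.rank : ℝ) + beta * (l0 p.2 : ℝ))
    (feasL feasLB : Set (Matrix (Fin m) (Fin n) ℝ × Matrix (Fin m) (Fin n) ℝ))
    (hfeasL : feasL = {p | p.1.rank ≤ d ∧ p.2 ∈ BS})
    (hfeasLB : feasLB = {p | p.1 ∈ BZ ∧ p.1.rank ≤ d ∧ p.2 ∈ BS})
    (FF : Matrix (Fin m) (Fin d) ℝ × Matrix (Fin n) (Fin d) ℝ × Matrix (Fin m) (Fin n) ℝ → ℝ)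
    (hFF : FF = fun t => f (t.1 * t.2.1ᵀ) t.2.2 +
      lam * ((nnzc t.1 : ℝ) + (nnzc t.2.1 : ℝ)) + beta * (l0 t.2.2 : ℝ))
    (feasFB : Set (Matrix (Fin m) (Fin d) ℝ × Matrix (Fin n) (Fin d) ℝ × Matrix (Fin m) (Fin n) ℝ))
    (hfeasFB : feasFB = {t | t.1 ∈ BX ∧ t.2.1 ∈ BY ∧ t.2.2 ∈ BS})
    -- assumption: τ ≥ ‖𝓑^Z‖_max^{1/2}
    (hτ : (⨆ U ∈ BZ, ENNReal.ofReal (specNorm U)) ^ (1/2 : ℝ) ≤ τ)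
    -- assumption: (𝓑^Z × 𝓑^S) ∩ 𝒢_(L) ≠ ∅
    (hG : ((BZ ×ˢ BS) ∩ globMin F0 feasL).Nonempty) :
    optVal F0 feasLB = optVal FF feasFB ∧
    optVal FF feasFB = optVal F0 feasL ∧
    globMin F0 feasLB ⊆ (fun t => (t.1 * t.2.1ᵀ, t.2.2)) '' globMin FF feasFB ∧
    (fun t => (t.1 * t.2.1ᵀ, t.2.2)) '' globMin FF feasFB ⊆ globMin F0 feasL :=
  stmt1_general m n d lam beta hlam f BS BZ τ BX hBX BY hBY F0 hF0 feasL feasLB hfeasL hfeasLB FF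
    hFF feasFB hfeasFB hτ hG
end
end

section
/- Let (X̄, Ȳ, S̄) ∈ 𝓑^X × 𝓑^Y × 𝓑^S. Then (X̄, Ȳ, S̄) is a local minimizer of problem (FB) if and only if (X̄, Ȳ, S̄) is a local minimizer of the function (X,Y,S) ↦ f(XYᵀ,S) on underline-𝓑^X_{𝕀_{X̄}} × underline-𝓑^Y_{𝕀_{Ȳ}} × underline-𝓑^S_{𝕁_{S̄}}. -/
open Matrix Set
open scoped ENNReal

attribute [local instance] Matrix.frobeniusNormedAddCommGroup

noncomputable section

/-- the matrix obtained from `U` by zeroing all entries outside the index set `J`. -/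
def restrictE {m n : ℕ} (J : Set (Fin m × Fin n)) (U : Matrix (Fin m) (Fin n) ℝ) :
    Matrix (Fin m) (Fin n) ℝ :=
  fun i j => J.indicator (fun p => U p.1 p.2) (i, j)

/-- the matrix obtained from `U` by zeroing all columns outside the index set `I`. -/
def restrictC {m d : ℕ} (I : Set (Fin d)) (U : Matrix (Fin m) (Fin d) ℝ) :
    Matrix (Fin m) (Fin d) ℝ :=
  fun j i => I.indicator (fun i' => U j i') i

/-- the column index set `𝕀_X`: nonzero columns if `λ > 0`, all columns if `λ = 0`. -/
def colIdx {m d : ℕ} (lam : ℝ) (X : Matrix (Fin m) (Fin d) ℝ) : Set (Fin d) :=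
  {i | 0 < lam → ∃ j, X j i ≠ 0}

/-- the entry index set `𝕁_S`: the support of `S` if `β > 0`, all entries if `β = 0`. -/
def entryIdx {m n : ℕ} (beta : ℝ) (S : Matrix (Fin m) (Fin n) ℝ) : Set (Fin m × Fin n) :=
  {p | 0 < beta → S p.1 p.2 ≠ 0}

/-! The penalty is a weighted count of nonzero columns and entries. Near `(X̄, Ȳ, S̄)` supports can
only grow, so the penalty cannot decrease there, and at every point moved by the restriction map
`P` it increases by a fixed positive amount. On the restricted set the penalty is at most its value
at `(X̄, Ȳ, S̄)`, which gives one direction. For the other, compare a feasible `t` with `P t`, which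
is in the restricted set: `f (P t) - f t → 0` by continuity of `f`, so close to `(X̄, Ȳ, S̄)` the
jump of the penalty dominates. -/

open Filter Topology

section SharpPenalty

variable {E F : Type*} [TopologicalSpace E] [TopologicalSpace F]

def IsSharpPenaltyAt (P : E → E) (pen : E → ℝ) (x : E) : Prop :=
  ∃ c > 0, ∀ᶠ y in 𝓝 x, pen x ≤ pen y ∧ (P y ≠ y → pen x + c ≤ pen y)

theorem IsSharpPenaltyAt.prodMap {P : E → E} {Q : F → F} {pen : E → ℝ} {pen' : F → ℝ}
    {x : E} {y : F} (h : IsSharpPenaltyAt P pen x) (h' : IsSharpPenaltyAt Q pen' y) :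
    IsSharpPenaltyAt (Prod.map P Q) (fun z => pen z.1 + pen' z.2) (x, y) := by
  obtain ⟨c, hc, hev⟩ := h
  obtain ⟨c', hc', hev'⟩ := h'
  refine ⟨min c c', lt_min hc hc', ?_⟩
  filter_upwards [hev.prod_nhds hev'] with z ⟨⟨hz₁, hjump₁⟩, hz₂, hjump₂⟩
  refine ⟨by linarith, fun hz => ?_⟩
  have hmoved : P z.1 ≠ z.1 ∨ Q z.2 ≠ z.2 := by
    by_contra! hfix
    exact hz (Prod.ext hfix.1 hfix.2)
  rcases hmoved with hmoved | hmoved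
  · linarith [hjump₁ hmoved, min_le_left c c']
  · linarith [hjump₂ hmoved, min_le_right c c']

theorem isSharpPenaltyAt_mul_ncard {ι : Type*} [Finite ι] {p : ι → E → Prop}
    (hp : ∀ i, IsOpen {y | p i y}) {P : E → E} {x : E} {w : ℝ} (hw : 0 ≤ w)
    (hP : ∀ y, P y ≠ y → 0 < w ∧ ∃ i, p i y ∧ ¬p i x) :
    IsSharpPenaltyAt P (fun y => w * {i | p i y}.ncard) x := by
  have hsupp : ∀ᶠ y in 𝓝 x, {i | p i x} ⊆ {i | p i y} := by
    refine eventually_all.2 fun i => ?_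
    by_cases hi : p i x
    · exact Filter.mem_of_superset ((hp i).mem_nhds hi) fun _ hy _ => hy
    · exact Eventually.of_forall fun _ h => absurd h hi
  -- for `w = 0`, `hP` says that `P` moves no point, so any margin will do
  refine ⟨if 0 < w then w else 1, by split_ifs <;> positivity, ?_⟩
  filter_upwards [hsupp] with y hy
  refine ⟨mul_le_mul_of_nonneg_left (by exact_mod_cast Set.ncard_le_ncard hy) hw, fun hPy => ?_⟩
  obtain ⟨hw, i, hiy, hix⟩ := hP y hPy
  have hlt : {i | p i x}.ncard < {i | p i y}.ncard :=
    Set.ncard_lt_ncard (ssubset_of_subset_not_subset hy fun h => hix (h hiy))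
  rw [if_pos hw, ← mul_add_one]
  gcongr
  exact_mod_cast hlt

theorem mul_ncard_le_mul_ncard {ι : Type*} [Finite ι] {s t : Set ι} {w : ℝ} (hw : 0 ≤ w)
    (h : 0 < w → s ⊆ t) : w * s.ncard ≤ w * t.ncard := by
  rcases hw.eq_or_lt with rfl | hw
  · simp
  · exact mul_le_mul_of_nonneg_left (by exact_mod_cast Set.ncard_le_ncard (h hw)) hw.le

theorem IsLocalMinOn.of_add_of_le {g pen : E → ℝ} {A R : Set E} {x : E}
    (hmin : IsLocalMinOn (fun y => g y + pen y) A x) (hRA : R ⊆ A)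
    (hpen : ∀ y ∈ R, pen y ≤ pen x) : IsLocalMinOn g R x := by
  filter_upwards [hmin.on_subset hRA, self_mem_nhdsWithin] with y hy hyR
  linarith [hpen y hyR]

theorem IsLocalMinOn.add_of_isSharpPenaltyAt {g pen : E → ℝ} {P : E → E} {A R : Set E} {x : E}
    (hmin : IsLocalMinOn g R x) (hg : ContinuousAt g x) (hP : ContinuousAt P x) (hPx : P x = x)
    (hPA : Set.MapsTo P A R) (hpen : IsSharpPenaltyAt P pen x) :
    IsLocalMinOn (fun y => g y + pen y) A x := by
  obtain ⟨c, hc, hjump⟩ := hpen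
  have hPR : Tendsto P (𝓝[A] x) (𝓝[R] x) := by
    simpa only [hPx] using hP.continuousWithinAt.tendsto_nhdsWithin hPA
  have hgap : ∀ᶠ y in 𝓝 x, g (P y) - g y < c := by
    have hlim : Tendsto (fun y => g (P y) - g y) (𝓝 x) (𝓝 0) := by
      simpa [hPx] using ((hPx.symm ▸ hg : ContinuousAt g (P x)).comp hP).tendsto.sub hg.tendsto
    exact hlim.eventually (gt_mem_nhds hc)
  filter_upwards [hPR.eventually hmin, nhdsWithin_le_nhds (hgap.and hjump)]
    with y hy ⟨hgy, hpen_le, hpen_jump⟩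
  by_cases hfix : P y = y
  · rw [hfix] at hy
    linarith
  · linarith [hpen_jump hfix]

end SharpPenalty

section Restriction

variable {m n : ℕ}

theorem continuous_restrictC (I : Set (Fin n)) :
    Continuous (restrictC I : Matrix (Fin m) (Fin n) ℝ → Matrix (Fin m) (Fin n) ℝ) := by
  refine continuous_pi fun j => continuous_pi fun i => ?_
  by_cases hi : i ∈ I
  · simpa [restrictC, hi] using continuous_id.matrix_elem j i
  · simpa [restrictC, hi] using continuous_const

theorem continuous_restrictE (J : Set (Fin m × Fin n)) : Continuous (restrictE J) := by
  refine continuous_pi fun i => continuous_pi fun j => ?_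
  by_cases h : (i, j) ∈ J
  · simpa [restrictE, h] using continuous_id.matrix_elem i j
  · simpa [restrictE, h] using continuous_const

theorem restrictC_eq_self {I : Set (Fin n)} {X : Matrix (Fin m) (Fin n) ℝ}
    (h : ∀ i ∉ I, ∀ j, X j i = 0) : restrictC I X = X := by
  ext j i
  by_cases hi : i ∈ I
  · simp [restrictC, hi]
  · simp [restrictC, hi, h i hi j]

theorem restrictE_eq_self {J : Set (Fin m × Fin n)} {S : Matrix (Fin m) (Fin n) ℝ}
    (h : ∀ p ∉ J, S p.1 p.2 = 0) : restrictE J S = S := by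
  ext i j
  by_cases hij : (i, j) ∈ J
  · simp [restrictE, hij]
  · simp [restrictE, hij, h _ hij]

theorem notMem_colIdx {lam : ℝ} {X : Matrix (Fin m) (Fin n) ℝ} {i : Fin n} :
    i ∉ colIdx lam X ↔ 0 < lam ∧ ∀ j, X j i = 0 := by
  simp [colIdx]

theorem notMem_entryIdx {beta : ℝ} {S : Matrix (Fin m) (Fin n) ℝ} {p : Fin m × Fin n} :
    p ∉ entryIdx beta S ↔ 0 < beta ∧ S p.1 p.2 = 0 := by
  simp [entryIdx]

theorem restrictC_colIdx_self (lam : ℝ) (X : Matrix (Fin m) (Fin n) ℝ) :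
    restrictC (colIdx lam X) X = X :=
  restrictC_eq_self fun _ hi => (notMem_colIdx.1 hi).2

theorem restrictE_entryIdx_self (beta : ℝ) (S : Matrix (Fin m) (Fin n) ℝ) :
    restrictE (entryIdx beta S) S = S :=
  restrictE_eq_self fun _ hp => (notMem_entryIdx.1 hp).2

theorem exists_of_restrictC_colIdx_ne {lam : ℝ} {Xbar X : Matrix (Fin m) (Fin n) ℝ}
    (h : restrictC (colIdx lam Xbar) X ≠ X) :
    0 < lam ∧ ∃ i, (∃ j, X j i ≠ 0) ∧ ¬∃ j, Xbar j i ≠ 0 := by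
  obtain ⟨i, hi, j, hj⟩ : ∃ i ∉ colIdx lam Xbar, ∃ j, X j i ≠ 0 := by
    by_contra! hzero
    exact h (restrictC_eq_self hzero)
  obtain ⟨hlam, hcol⟩ := notMem_colIdx.1 hi
  exact ⟨hlam, i, ⟨j, hj⟩, by simpa using hcol⟩

theorem exists_of_restrictE_entryIdx_ne {beta : ℝ} {Sbar S : Matrix (Fin m) (Fin n) ℝ}
    (h : restrictE (entryIdx beta Sbar) S ≠ S) :
    0 < beta ∧ ∃ p : Fin m × Fin n, S p.1 p.2 ≠ 0 ∧ ¬Sbar p.1 p.2 ≠ 0 := by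
  obtain ⟨p, hp, hS⟩ : ∃ p ∉ entryIdx beta Sbar, S p.1 p.2 ≠ 0 := by
    by_contra! hzero
    exact h (restrictE_eq_self hzero)
  obtain ⟨hbeta, hSbar⟩ := notMem_entryIdx.1 hp
  exact ⟨hbeta, p, hS, not_not.2 hSbar⟩

theorem isSharpPenaltyAt_nnzc {lam : ℝ} (hlam : 0 ≤ lam) (Xbar : Matrix (Fin m) (Fin n) ℝ) :
    IsSharpPenaltyAt (restrictC (colIdx lam Xbar)) (fun X => lam * (nnzc X : ℝ)) Xbar := by
  have hopen : ∀ i, IsOpen {X : Matrix (Fin m) (Fin n) ℝ | ∃ j, X j i ≠ 0} := fun i => by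
    simp only [Set.ofPred_exists]
    exact isOpen_iUnion fun j => isOpen_ne_fun (continuous_id.matrix_elem j i) continuous_const
  unfold nnzc
  exact isSharpPenaltyAt_mul_ncard hopen hlam fun _ => exists_of_restrictC_colIdx_ne

theorem isSharpPenaltyAt_l0 {beta : ℝ} (hbeta : 0 ≤ beta) (Sbar : Matrix (Fin m) (Fin n) ℝ) :
    IsSharpPenaltyAt (restrictE (entryIdx beta Sbar)) (fun S => beta * (l0 S : ℝ)) Sbar := by
  have hopen : ∀ p : Fin m × Fin n, IsOpen {S : Matrix (Fin m) (Fin n) ℝ | S p.1 p.2 ≠ 0} :=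
    fun p => isOpen_ne_fun (continuous_id.matrix_elem p.1 p.2) continuous_const
  unfold l0
  exact isSharpPenaltyAt_mul_ncard hopen hbeta fun _ => exists_of_restrictE_entryIdx_ne

theorem mul_nnzc_restrictC_colIdx_le {lam : ℝ} (hlam : 0 ≤ lam)
    (Xbar U : Matrix (Fin m) (Fin n) ℝ) :
    lam * (nnzc (restrictC (colIdx lam Xbar) U) : ℝ) ≤ lam * (nnzc Xbar : ℝ) := by
  refine mul_ncard_le_mul_ncard hlam fun hlam i ⟨j, hj⟩ => ?_
  by_contra hcol
  have hi : i ∉ colIdx lam Xbar := fun h => hcol (h hlam)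
  simp [restrictC, hi] at hj

theorem mul_l0_restrictE_entryIdx_le {beta : ℝ} (hbeta : 0 ≤ beta)
    (Sbar U : Matrix (Fin m) (Fin n) ℝ) :
    beta * (l0 (restrictE (entryIdx beta Sbar) U) : ℝ) ≤ beta * (l0 Sbar : ℝ) := by
  refine mul_ncard_le_mul_ncard hbeta fun hbeta p hp => ?_
  by_contra hSbar
  have hp' : p ∉ entryIdx beta Sbar := fun h => hSbar (h hbeta)
  simp [restrictE, hp'] at hp

theorem colNorm_restrictC_le (I : Set (Fin n)) (U : Matrix (Fin m) (Fin n) ℝ) (i : Fin n) :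
    colNorm (restrictC I U) i ≤ colNorm U i := by
  by_cases hi : i ∈ I
  · simp [colNorm, restrictC, hi]
  · simp [colNorm, restrictC, hi]

theorem restrictE_mem_box {κ1 κ2 : Fin m → Fin n → EReal} (hκ1 : ∀ i j, κ1 i j ≤ 0)
    (hκ2 : ∀ i j, 0 ≤ κ2 i j) {S : Matrix (Fin m) (Fin n) ℝ}
    (hS : ∀ i j, κ1 i j ≤ (S i j : EReal) ∧ (S i j : EReal) ≤ κ2 i j) (J : Set (Fin m × Fin n))
    (i : Fin m) (j : Fin n) :
    κ1 i j ≤ (restrictE J S i j : EReal) ∧ (restrictE J S i j : EReal) ≤ κ2 i j := by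
  by_cases hij : (i, j) ∈ J
  · simpa [restrictE, hij] using hS i j
  · simpa [restrictE, hij] using ⟨hκ1 i j, hκ2 i j⟩

end Restriction

theorem stmt4_general (m n d : ℕ)
    (lam beta : ℝ) (hlam : 0 ≤ lam) (hbeta : 0 ≤ beta)
    (f : Matrix (Fin m) (Fin n) ℝ → Matrix (Fin m) (Fin n) ℝ → ℝ)
    (hfLip : LocallyLipschitz fun p : Matrix (Fin m) (Fin n) ℝ × Matrix (Fin m) (Fin n) ℝ =>
      f p.1 p.2)
    (κ1 κ2 : Fin m → Fin n → EReal)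
    (hκ1 : ∀ i j, κ1 i j ≤ 0) (hκ2 : ∀ i j, 0 ≤ κ2 i j)
    (BS : Set (Matrix (Fin m) (Fin n) ℝ))
    (hBS : BS = {S | ∀ i j, κ1 i j ≤ (S i j : EReal) ∧ (S i j : EReal) ≤ κ2 i j})
    (τ : ℝ≥0∞)
    (BX : Set (Matrix (Fin m) (Fin d) ℝ))
    (hBX : BX = {X | ∀ i, ENNReal.ofReal (colNorm X i) ≤ τ})
    (BY : Set (Matrix (Fin n) (Fin d) ℝ))
    (hBY : BY = {Y | ∀ i, ENNReal.ofReal (colNorm Y i) ≤ τ})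
    (FF : Matrix (Fin m) (Fin d) ℝ × Matrix (Fin n) (Fin d) ℝ × Matrix (Fin m) (Fin n) ℝ → ℝ)
    (hFF : FF = fun t => f (t.1 * t.2.1ᵀ) t.2.2 +
      lam * ((nnzc t.1 : ℝ) + (nnzc t.2.1 : ℝ)) + beta * (l0 t.2.2 : ℝ))
    (feasFB : Set (Matrix (Fin m) (Fin d) ℝ × Matrix (Fin n) (Fin d) ℝ × Matrix (Fin m) (Fin n) ℝ))
    (hfeasFB : feasFB = {t | t.1 ∈ BX ∧ t.2.1 ∈ BY ∧ t.2.2 ∈ BS})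
    -- the given point
    (Xbar : Matrix (Fin m) (Fin d) ℝ) (Ybar : Matrix (Fin n) (Fin d) ℝ)
    (Sbar : Matrix (Fin m) (Fin n) ℝ)
    (hXbar : Xbar ∈ BX) (hYbar : Ybar ∈ BY) (hSbar : Sbar ∈ BS)
    -- the restricted set
    (restr : Set (Matrix (Fin m) (Fin d) ℝ × Matrix (Fin n) (Fin d) ℝ × Matrix (Fin m) (Fin n) ℝ))
    (hrestr : restr = {t | t.1 ∈ restrictC (colIdx lam Xbar) '' BX ∧
      t.2.1 ∈ restrictC (colIdx lam Ybar) '' BY ∧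
      t.2.2 ∈ restrictE (entryIdx beta Sbar) '' BS}) :
    ((Xbar, Ybar, Sbar) ∈ feasFB ∧ IsLocalMinOn FF feasFB (Xbar, Ybar, Sbar)) ↔
    ((Xbar, Ybar, Sbar) ∈ restr ∧
      IsLocalMinOn
        (fun t : Matrix (Fin m) (Fin d) ℝ × Matrix (Fin n) (Fin d) ℝ × Matrix (Fin m) (Fin n) ℝ =>
          f (t.1 * t.2.1ᵀ) t.2.2) restr (Xbar, Ybar, Sbar)) := by
  subst hBX hBY hBS
  set P := Prod.map (restrictC (colIdx lam Xbar))
    (Prod.map (restrictC (colIdx lam Ybar)) (restrictE (entryIdx beta Sbar)))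
  have hPA : Set.MapsTo P feasFB restr := by
    rw [hfeasFB, hrestr]
    exact fun t ⟨hX, hY, hS⟩ => ⟨⟨t.1, hX, rfl⟩, ⟨t.2.1, hY, rfl⟩, ⟨t.2.2, hS, rfl⟩⟩
  have hRA : restr ⊆ feasFB := by
    rw [hfeasFB, hrestr]
    rintro ⟨X, Y, S⟩ ⟨⟨U, hU, rfl⟩, ⟨V, hV, rfl⟩, ⟨W, hW, rfl⟩⟩
    exact ⟨fun i => (ENNReal.ofReal_le_ofReal (colNorm_restrictC_le _ U i)).trans (hU i),
      fun i => (ENNReal.ofReal_le_ofReal (colNorm_restrictC_le _ V i)).trans (hV i),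
      restrictE_mem_box hκ1 hκ2 hW _⟩
  have hPbar : P (Xbar, Ybar, Sbar) = (Xbar, Ybar, Sbar) := by
    simp only [P, Prod.map, restrictC_colIdx_self, restrictE_entryIdx_self]
  have hbar : (Xbar, Ybar, Sbar) ∈ restr := hPbar ▸ hPA (hfeasFB ▸ ⟨hXbar, hYbar, hSbar⟩)
  have hpen_le : ∀ t ∈ restr,
      lam * (nnzc t.1 : ℝ) + (lam * (nnzc t.2.1 : ℝ) + beta * (l0 t.2.2 : ℝ)) ≤
        lam * (nnzc Xbar : ℝ) + (lam * (nnzc Ybar : ℝ) + beta * (l0 Sbar : ℝ)) := by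
    rw [hrestr]
    rintro ⟨X, Y, S⟩ ⟨⟨U, -, rfl⟩, ⟨V, -, rfl⟩, ⟨W, -, rfl⟩⟩
    linarith [mul_nnzc_restrictC_colIdx_le hlam Xbar U, mul_nnzc_restrictC_colIdx_le hlam Ybar V,
      mul_l0_restrictE_entryIdx_le hbeta Sbar W]
  have hg : Continuous fun t : Matrix (Fin m) (Fin d) ℝ × Matrix (Fin n) (Fin d) ℝ ×
      Matrix (Fin m) (Fin n) ℝ => f (t.1 * t.2.1ᵀ) t.2.2 :=
    hfLip.continuous.comp ((continuous_fst.matrix_mul continuous_snd.fst.matrix_transpose).prodMk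
      continuous_snd.snd)
  have hP : Continuous P := (continuous_restrictC _).prodMap
    ((continuous_restrictC _).prodMap (continuous_restrictE _))
  have hsharp := (isSharpPenaltyAt_nnzc hlam Xbar).prodMap
    ((isSharpPenaltyAt_nnzc hlam Ybar).prodMap (isSharpPenaltyAt_l0 hbeta Sbar))
  rw [show FF = fun t => f (t.1 * t.2.1ᵀ) t.2.2 +
      (lam * (nnzc t.1 : ℝ) + (lam * (nnzc t.2.1 : ℝ) + beta * (l0 t.2.2 : ℝ))) by
    rw [hFF]; funext t; ring]
  constructor
  · rintro ⟨-, hmin⟩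
    exact ⟨hbar, hmin.of_add_of_le hRA hpen_le⟩
  · rintro ⟨-, hmin⟩
    exact ⟨hRA hbar,
      hmin.add_of_isSharpPenaltyAt hg.continuousAt hP.continuousAt hPbar hPA hsharp⟩

/-- `(X̄,Ȳ,S̄)` is a local minimizer of problem (FB) iff it is a local minimizer of
`(X,Y,S) ↦ f(XYᵀ,S)` on `underline-𝓑^X_{𝕀_{X̄}} × underline-𝓑^Y_{𝕀_{Ȳ}} × underline-𝓑^S_{𝕁_{S̄}}`. -/
theorem stmt4 (m n d : ℕ) (hm : 0 < m) (hn : 0 < n) (hd : 0 < d)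
    (lam beta : ℝ) (hlam : 0 ≤ lam) (hbeta : 0 ≤ beta)
    (f : Matrix (Fin m) (Fin n) ℝ → Matrix (Fin m) (Fin n) ℝ → ℝ)
    (hf0 : ∀ Z S, 0 ≤ f Z S)
    (hfLip : LocallyLipschitz fun p : Matrix (Fin m) (Fin n) ℝ × Matrix (Fin m) (Fin n) ℝ =>
      f p.1 p.2)
    (κ1 κ2 : Fin m → Fin n → EReal)
    (hκ1 : ∀ i j, κ1 i j ≤ 0) (hκ2 : ∀ i j, 0 ≤ κ2 i j)
    (BS : Set (Matrix (Fin m) (Fin n) ℝ))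
    (hBS : BS = {S | ∀ i j, κ1 i j ≤ (S i j : EReal) ∧ (S i j : EReal) ≤ κ2 i j})
    (τ : ℝ≥0∞)
    (BX : Set (Matrix (Fin m) (Fin d) ℝ))
    (hBX : BX = {X | ∀ i, ENNReal.ofReal (colNorm X i) ≤ τ})
    (BY : Set (Matrix (Fin n) (Fin d) ℝ))
    (hBY : BY = {Y | ∀ i, ENNReal.ofReal (colNorm Y i) ≤ τ})
    (FF : Matrix (Fin m) (Fin d) ℝ × Matrix (Fin n) (Fin d) ℝ × Matrix (Fin m) (Fin n) ℝ → ℝ)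
    (hFF : FF = fun t => f (t.1 * t.2.1ᵀ) t.2.2 +
      lam * ((nnzc t.1 : ℝ) + (nnzc t.2.1 : ℝ)) + beta * (l0 t.2.2 : ℝ))
    (feasFB : Set (Matrix (Fin m) (Fin d) ℝ × Matrix (Fin n) (Fin d) ℝ × Matrix (Fin m) (Fin n) ℝ))
    (hfeasFB : feasFB = {t | t.1 ∈ BX ∧ t.2.1 ∈ BY ∧ t.2.2 ∈ BS})
    -- the given point
    (Xbar : Matrix (Fin m) (Fin d) ℝ) (Ybar : Matrix (Fin n) (Fin d) ℝ)
    (Sbar : Matrix (Fin m) (Fin n) ℝ)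
    (hXbar : Xbar ∈ BX) (hYbar : Ybar ∈ BY) (hSbar : Sbar ∈ BS)
    -- the restricted set
    (restr : Set (Matrix (Fin m) (Fin d) ℝ × Matrix (Fin n) (Fin d) ℝ × Matrix (Fin m) (Fin n) ℝ))
    (hrestr : restr = {t | t.1 ∈ restrictC (colIdx lam Xbar) '' BX ∧
      t.2.1 ∈ restrictC (colIdx lam Ybar) '' BY ∧
      t.2.2 ∈ restrictE (entryIdx beta Sbar) '' BS}) :
    ((Xbar, Ybar, Sbar) ∈ feasFB ∧ IsLocalMinOn FF feasFB (Xbar, Ybar, Sbar)) ↔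
    ((Xbar, Ybar, Sbar) ∈ restr ∧
      IsLocalMinOn
        (fun t : Matrix (Fin m) (Fin d) ℝ × Matrix (Fin n) (Fin d) ℝ × Matrix (Fin m) (Fin n) ℝ =>
          f (t.1 * t.2.1ᵀ) t.2.2) restr (Xbar, Ybar, Sbar)) :=
  stmt4_general m n d lam beta hlam hbeta f hfLip κ1 κ2 hκ1 hκ2 BS hBS τ BX hBX BY hBY FF hFF feasFB
    hfeasFB Xbar Ybar Sbar hXbar hYbar hSbar restr hrestr
end
end
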